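/- arXiv:1311.0410 — 7 statements merged into one kernel-verified Lean document; each statement's English description precedes it below -/
import Mathlib

section
/- Let G ⊂ U(n) be a compact Lie group with Lie algebra g, and let ξ, η ∈ g, u ∈ G, and g₀ := exp(iη)·u ∈ G^c. Then g₀ ξ g₀⁻¹ = ξ if and only if u ξ u⁻¹ = ξ and [ξ, η] = 0. In other words, the stabilizer of ξ under the adjoint action of G^c is the complexification of its stabilizer in G. -/
/-!
Put `E = exp(iη)`, a Hermitian matrix, and `B = u ξ u⁻¹`, which is skew-Hermitian like `ξ`.
If `E B E⁻¹ = ξ`, taking adjoints gives `E⁻¹ B E = ξ` too, so `E² = exp(2iη)` commutes with `ξ`.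
A Hermitian matrix is a real function (the logarithm) of its exponential, hence `iη` and then
`E` commute with `ξ`, and `B = ξ` follows. The converse is immediate.
-/

open Matrix

theorem IsSelfAdjoint.commute_exp_left_iff {A : Type*} [NormedRing A] [StarRing A]
    [NormedAlgebra ℝ A] [ContinuousFunctionalCalculus ℝ A IsSelfAdjoint] {a b : A}
    (ha : IsSelfAdjoint a) : Commute (NormedSpace.exp a) b ↔ Commute a b :=
  ⟨fun h => CFC.log_exp a ha ▸ h.cfc_real Real.log, Commute.exp_left⟩

-- The L2 operator norm keeps the topology of `Matrix`, hence `NormedSpace.exp`, unchanged.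
open scoped Matrix.Norms.L2Operator in
theorem Matrix.IsHermitian.commute_exp_left_iff {n : Type*} [Fintype n] [DecidableEq n]
    {a b : Matrix n n ℂ} (ha : a.IsHermitian) : Commute (NormedSpace.exp a) b ↔ Commute a b :=
  ha.isSelfAdjoint.commute_exp_left_iff

theorem IsSelfAdjoint.commute_mul_self_of_mul_eq_mul {R : Type*} [NonUnitalRing R] [StarRing R]
    {e b c : R} (he : IsSelfAdjoint e) (hb : star b = -b) (hc : star c = -c)
    (h : e * b = c * e) : Commute (e * e) c := by
  have h' : b * e = e * c := by
    simpa [star_mul, he.star_eq, hb, hc] using congrArg star h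
  calc e * e * c = e * (b * e) := by rw [h', mul_assoc]
    _ = c * (e * e) := by rw [← mul_assoc, h, mul_assoc]

/-- (Lemma `le:isotropy` (ii).)
Let `ξ, η` be skew-Hermitian matrices (elements of the Lie algebra
`g ⊆ u(n)` of a compact group `G ⊆ U(n)`) and let `u` be unitary, so that
`g₀ := exp(iη) u` is a typical element of the complexification `G^c` (polar
decomposition).  Then `g₀ ξ g₀⁻¹ = ξ` iff `u ξ u⁻¹ = ξ` and `[ξ, η] = 0`:
the stabilizer of `ξ` in `G^c` is the complexification of its stabilizer
in `G`. -/
theorem stmt_2 {n : ℕ} (ξ η u : Matrix (Fin n) (Fin n) ℂ)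
    (hξ : ξᴴ = -ξ) (hη : ηᴴ = -η)
    (hu : u ∈ Matrix.unitaryGroup (Fin n) ℂ) :
    (NormedSpace.exp (Complex.I • η) * u) * ξ *
        (NormedSpace.exp (Complex.I • η) * u)⁻¹ = ξ ↔
      u * ξ * u⁻¹ = ξ ∧ ξ * η - η * ξ = 0 := by
  set A := Complex.I • η
  set E := NormedSpace.exp A
  have hA : A.IsHermitian := by
    simp [A, IsHermitian, conjTranspose_smul, hη]
  have hAξ : Commute A ξ ↔ ξ * η - η * ξ = 0 := by
    rw [Commute.smul_left_iff₀ Complex.I_ne_zero, sub_eq_zero, eq_comm]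
    rfl
  have hE : IsUnit E := isUnit_exp A
  have hu_inv : u⁻¹ = star u := inv_eq_left_inv (Unitary.star_mul_self_of_mem hu)
  have hB : star (u * ξ * u⁻¹) = -(u * ξ * u⁻¹) := by
    simp [hu_inv, star_mul, star_eq_conjTranspose, hξ, mul_assoc]
  let _ : Invertible E := hE.invertible
  rw [Matrix.mul_inv_rev, show E * u * ξ * (u⁻¹ * E⁻¹) = E * (u * ξ * u⁻¹) * E⁻¹ by
    simp only [mul_assoc], mul_inv_eq_iff_eq_mul_of_invertible, ← hAξ]
  constructor
  · intro h
    have hEEξ : Commute (E * E) ξ := hA.exp.isSelfAdjoint.commute_mul_self_of_mul_eq_mul hB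
      (by rw [star_eq_conjTranspose, hξ]) h
    rw [← exp_add_of_commute A A (Commute.refl A), (hA.add hA).commute_exp_left_iff,
      ← two_smul ℂ, Commute.smul_left_iff₀ two_ne_zero] at hEEξ
    refine ⟨hE.mul_left_cancel ?_, hEEξ⟩
    rw [h, hEEξ.exp_left.eq]
  · rintro ⟨hfix, hcomm⟩
    rw [hfix, hcomm.exp_left.eq]
end

section
/- For every g ∈ G^c and every ζ = ξ + iη ∈ g^c, writing gζg⁻¹ = ξ' + iη' with ξ', η' ∈ g, one has |ξ'|² − |η'|² = |ξ|² − |η|² and ⟨ξ', η'⟩ = ⟨ξ, η⟩. Consequently, if ζ is conjugate under G^c to an element of g \ {0}, then |ξ| > |η| and ⟨ξ, η⟩ = 0. -/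
/-!
The complex quadratic form `ζ ↦ tr (ζ * ζ)` is invariant under conjugation by invertible
matrices. For `ζ = ξ + iη` with `ξ, η` skew-Hermitian its real part is `|η|² - |ξ|²` and its
imaginary part is `-2⟨ξ, η⟩`, where `|a|² = Re tr (aᴴ a)` and `⟨a, b⟩ = Re tr (aᴴ b)`.
If `ζ` is conjugate to `ζ' ∈ u(n) \ {0}`, comparing with `ξ' = ζ'`, `η' = 0` gives
`|ξ|² - |η|² = |ζ'|² > 0` and `⟨ξ, η⟩ = 0`.
-/

open Matrix
open scoped ComplexOrder

namespace Matrix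

variable {m n : Type*} [Fintype m]

lemma im_trace_conjTranspose_mul_self [Fintype n] (A : Matrix m n ℂ) : (Aᴴ * A).trace.im = 0 :=
  (Complex.nonneg_iff.1 (posSemidef_conjTranspose_mul_self A).trace_nonneg).2.symm

lemma re_trace_conjTranspose_mul_self_pos [Fintype n] {A : Matrix m n ℂ} (hA : A ≠ 0) :
    0 < (Aᴴ * A).trace.re := by
  have hnonneg := (posSemidef_conjTranspose_mul_self A).trace_nonneg
  have hne : (Aᴴ * A).trace ≠ 0 := trace_conjTranspose_mul_self_eq_zero_iff.not.2 hA
  exact (Complex.pos_iff.1 (hnonneg.lt_of_ne' hne)).1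

lemma im_trace_conjTranspose_mul_of_skew {ξ η : Matrix m m ℂ} (hξ : ξᴴ = -ξ) (hη : ηᴴ = -η) :
    (ξᴴ * η).trace.im = 0 := by
  refine Complex.conj_eq_iff_im.1 ?_
  calc star (ξᴴ * η).trace = (ηᴴ * ξ).trace := by
        rw [← trace_conjTranspose, conjTranspose_mul, conjTranspose_conjTranspose]
    _ = (ξᴴ * η).trace := by
        rw [hξ, hη, neg_mul, neg_mul, trace_neg, trace_neg, trace_mul_comm]

lemma trace_add_I_smul_mul_self {ξ η : Matrix m m ℂ} (hξ : ξᴴ = -ξ) (hη : ηᴴ = -η) :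
    ((ξ + Complex.I • η) * (ξ + Complex.I • η)).trace
      = (ηᴴ * η).trace - (ξᴴ * ξ).trace - 2 * Complex.I * (ξᴴ * η).trace := by
  simp only [hξ, hη, neg_mul, trace_neg, mul_add, add_mul, smul_mul_assoc, mul_smul_comm,
    trace_add, trace_smul, smul_eq_mul, trace_mul_comm η ξ]
  linear_combination (η * η).trace * Complex.I_sq

lemma re_trace_add_I_smul_mul_self {ξ η : Matrix m m ℂ} (hξ : ξᴴ = -ξ) (hη : ηᴴ = -η) :
    ((ξ + Complex.I • η) * (ξ + Complex.I • η)).trace.re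
      = (ηᴴ * η).trace.re - (ξᴴ * ξ).trace.re := by
  simp [trace_add_I_smul_mul_self hξ hη, im_trace_conjTranspose_mul_of_skew hξ hη]

lemma im_trace_add_I_smul_mul_self {ξ η : Matrix m m ℂ} (hξ : ξᴴ = -ξ) (hη : ηᴴ = -η) :
    ((ξ + Complex.I • η) * (ξ + Complex.I • η)).trace.im = -2 * (ξᴴ * η).trace.re := by
  simp [trace_add_I_smul_mul_self hξ hη, im_trace_conjTranspose_mul_self]

lemma trace_conj_mul_conj {α : Type*} [CommRing α] [DecidableEq m] {g : Matrix m m α}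
    (hg : IsUnit g) (A : Matrix m m α) :
    (g * A * g⁻¹ * (g * A * g⁻¹)).trace = (A * A).trace := by
  rw [← hg.unit_spec, ← coe_units_inv, ← sq, Units.conj_pow, trace_units_conj, sq]

lemma re_trace_invariants_of_isUnit_conj [DecidableEq m] {g ξ η ξ' η' : Matrix m m ℂ}
    (hg : IsUnit g) (hξ : ξᴴ = -ξ) (hη : ηᴴ = -η) (hξ' : ξ'ᴴ = -ξ') (hη' : η'ᴴ = -η')
    (hconj : g * (ξ + Complex.I • η) * g⁻¹ = ξ' + Complex.I • η') :
    (ξ'ᴴ * ξ').trace.re - (η'ᴴ * η').trace.re = (ξᴴ * ξ).trace.re - (ηᴴ * η).trace.re ∧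
      (ξ'ᴴ * η').trace.re = (ξᴴ * η).trace.re := by
  have htrace := trace_conj_mul_conj hg (ξ + Complex.I • η)
  rw [hconj] at htrace
  have hre := congrArg Complex.re htrace
  have him := congrArg Complex.im htrace
  rw [re_trace_add_I_smul_mul_self hξ' hη', re_trace_add_I_smul_mul_self hξ hη] at hre
  rw [im_trace_add_I_smul_mul_self hξ' hη', im_trace_add_I_smul_mul_self hξ hη] at him
  constructor <;> linarith

end Matrix

/-- (Lemma `le:WEIGHT3` for `G = U(n)`, `G^c = GL(n,ℂ)`, with
the invariant inner product `⟨a, b⟩ = Re tr(aᴴ b)` on `g = u(n)`.)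
For `ζ = ξ + iη ∈ g^c` (with `ξ, η` skew-Hermitian) and any `g ∈ G^c`
(an invertible matrix), writing `g ζ g⁻¹ = ξ' + iη'` with `ξ', η'`
skew-Hermitian, the quantities `|ξ|² − |η|²` and `⟨ξ, η⟩` are preserved.
Consequently, if `ζ` is conjugate to a nonzero element `ζ'` of `g`
(i.e. `ζ'` skew-Hermitian, `ζ' ≠ 0`), then `|η| < |ξ|` and `⟨ξ, η⟩ = 0`. -/
theorem stmt_4 {n : ℕ} (ξ η : Matrix (Fin n) (Fin n) ℂ)
    (hξ : ξᴴ = -ξ) (hη : ηᴴ = -η) :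
    (∀ g ξ' η' : Matrix (Fin n) (Fin n) ℂ, IsUnit g →
      ξ'ᴴ = -ξ' → η'ᴴ = -η' →
      g * (ξ + Complex.I • η) * g⁻¹ = ξ' + Complex.I • η' →
      ((ξ'ᴴ * ξ').trace.re - (η'ᴴ * η').trace.re
          = (ξᴴ * ξ).trace.re - (ηᴴ * η).trace.re) ∧
        (ξ'ᴴ * η').trace.re = (ξᴴ * η).trace.re) ∧
    ((∃ g ζ' : Matrix (Fin n) (Fin n) ℂ, IsUnit g ∧ ζ'ᴴ = -ζ' ∧ ζ' ≠ 0 ∧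
        g * (ξ + Complex.I • η) * g⁻¹ = ζ') →
      (ηᴴ * η).trace.re < (ξᴴ * ξ).trace.re ∧ (ξᴴ * η).trace.re = 0) := by
  refine ⟨fun g ξ' η' hg hξ' hη' hconj =>
    re_trace_invariants_of_isUnit_conj hg hξ hη hξ' hη' hconj, ?_⟩
  rintro ⟨g, ζ', hg, hζ', hζ'_ne, hconj⟩
  obtain ⟨hnorm, hinner⟩ :=
    re_trace_invariants_of_isUnit_conj (η' := 0) hg hξ hη hζ' (by simp) (by simpa using hconj)
  simp only [Matrix.mul_zero, trace_zero, Complex.zero_re] at hnorm hinner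
  exact ⟨by linarith [re_trace_conjTranspose_mul_self_pos hζ'_ne], hinner.symm⟩
end

section
/- (Restricted moment-weight inequality at a fixed point of the flow.) Let x ∈ X with μ(x) ≠ 0 and suppose ξ, η ∈ g satisfy L_xξ = L_xη = 0, [μ(x),ξ] = 0, [μ(x),η] = 0, and |ξ'|² − |η'|² > 0 for the pair (ξ,η) viewed as ζ = ξ+iη a toral generator; assume moreover that ζ + λμ(x) is a toral generator for all λ ∈ ℝ with ζ + λμ(x) ≠ 0, so that |ξ − λμ(x)|² ≥ |η|² for all λ ∈ ℝ. Then ⟨μ(x), ξ⟩² / (|ξ|² − |η|²) ≤ |μ(x)|². -/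
open scoped RealInnerProductSpace

/-! The function `t ↦ ‖ξ - t • m‖² - c` is a real quadratic polynomial in `t`; being nonnegative,
it has nonpositive discriminant `4⟪m, ξ⟫² - 4‖m‖²(‖ξ‖² - c)`. -/

section

variable {E : Type*} [NormedAddCommGroup E] [InnerProductSpace ℝ E]

theorem norm_sub_smul_sq (ξ m : E) (t : ℝ) :
    ‖ξ - t • m‖ ^ 2 = ‖m‖ ^ 2 * (t * t) + -2 * ⟪m, ξ⟫ * t + ‖ξ‖ ^ 2 := by
  rw [norm_sub_sq_real, inner_smul_right, norm_smul, real_inner_comm, mul_pow,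
    Real.norm_eq_abs, sq_abs]
  ring

theorem sq_inner_le_of_forall_le_norm_sub_smul_sq {m ξ : E} {c : ℝ}
    (h : ∀ t : ℝ, c ≤ ‖ξ - t • m‖ ^ 2) : ⟪m, ξ⟫ ^ 2 ≤ ‖m‖ ^ 2 * (‖ξ‖ ^ 2 - c) := by
  have hdiscrim : discrim (‖m‖ ^ 2) (-2 * ⟪m, ξ⟫) (‖ξ‖ ^ 2 - c) ≤ 0 :=
    discrim_le_zero fun t => by linarith [h t, norm_sub_smul_sq ξ m t]
  rw [discrim] at hdiscrim
  linarith

end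

theorem stmt_7_general {g : Type*} [NormedAddCommGroup g] [InnerProductSpace ℝ g]
    (m ξ η : g)
    (htoral : ∀ lam : ℝ, ‖η‖ ^ 2 ≤ ‖ξ - lam • m‖ ^ 2) :
    ⟪m, ξ⟫ ^ 2 / (‖ξ‖ ^ 2 - ‖η‖ ^ 2) ≤ ‖m‖ ^ 2 := by
  have hgap : 0 ≤ ‖ξ‖ ^ 2 - ‖η‖ ^ 2 := by simpa using htoral 0
  exact div_le_of_le_mul₀ hgap (sq_nonneg _) (sq_inner_le_of_forall_le_norm_sub_smul_sq htoral)

/-- (Restricted moment-weight inequality, Theorem `thm:MW1`,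
Step 1.)  In the Lie algebra `g` (a real inner product space), let
`m = μ(x) ≠ 0` and let `ζ = ξ + iη` be a toral generator with `L_x^c ζ = 0`,
so that (by Lemma WEIGHT3 applied to `ζ + λ m`, which is again a toral
generator since `[m, ξ] = [m, η] = 0`) one has `|η|² < |ξ|²` and
`‖ξ − λ·m‖² ≥ ‖η‖²` for all `λ ∈ ℝ`.  Then
`⟨m, ξ⟩² / (|ξ|² − |η|²) ≤ |m|²`, i.e.
`⟨μ(x), ξ⟩² / (|ξ|² − |η|²) ≤ |μ(gx)|²`. -/
theorem stmt_7 {g : Type*} [NormedAddCommGroup g] [InnerProductSpace ℝ g]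
    (m ξ η : g) (hm : m ≠ 0)
    (hpos : ‖η‖ ^ 2 < ‖ξ‖ ^ 2)
    (htoral : ∀ lam : ℝ, ‖η‖ ^ 2 ≤ ‖ξ - lam • m‖ ^ 2) :
    ⟪m, ξ⟫ ^ 2 / (‖ξ‖ ^ 2 - ‖η‖ ^ 2) ≤ ‖m‖ ^ 2 :=
  stmt_7_general m ξ η htoral
end

section
/- (Serre's circumcentre lemma.) Let M be a complete, connected, simply connected Riemannian manifold of nonpositive sectional curvature and Ω ⊂ M a nonempty bounded set. Define r_Ω = inf{ r > 0 : ∃ p ∈ M with Ω ⊂ B̄(p,r) }. Then there exists a unique point p_Ω ∈ M with Ω ⊂ B̄(p_Ω, r_Ω). -/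
/-!
If `Ω` lies in closed balls of radii `r₁, r₂` about `c₁, c₂`, the midpoint inequality puts it in a
ball of squared radius `(r₁² + r₂²)/2 - d(c₁, c₂)²/4` about their midpoint, so
`d(c₁, c₂)² ≤ 2 (r₁² + r₂²) - 4 r_Ω²`. Centres of balls with radii decreasing to `r_Ω` therefore
form a Cauchy sequence, whose limit is a centre of radius `r_Ω`; two such centres coincide.
-/

open Filter Topology Bornology

def HasSemiHyperbolicMidpoints (M : Type*) [PseudoMetricSpace M] : Prop :=
  ∀ p₀ p₁ : M, ∃ m : M, ∀ q : M,
    dist m q ^ 2 ≤ (dist p₀ q ^ 2 + dist p₁ q ^ 2) / 2 - dist p₀ p₁ ^ 2 / 4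

namespace Metric

variable {M : Type*} [PseudoMetricSpace M] {Ω : Set M}

noncomputable def circumradius (Ω : Set M) : ℝ :=
  sInf {r : ℝ | 0 < r ∧ ∃ c : M, Ω ⊆ closedBall c r}

lemma circumradius_nonneg (Ω : Set M) : 0 ≤ circumradius Ω :=
  Real.sInf_nonneg fun _ hr => hr.1.le

lemma circumradius_le {c : M} {r : ℝ} (hr : 0 ≤ r) (h : Ω ⊆ closedBall c r) :
    circumradius Ω ≤ r := by
  refine le_of_forall_pos_le_add fun ε hε => csInf_le ⟨0, fun _ hr => hr.1.le⟩ ?_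
  exact ⟨by linarith, c, h.trans (closedBall_subset_closedBall (by linarith))⟩

lemma circumradius_sq_le (hne : Ω.Nonempty) {c : M} {ρ : ℝ}
    (h : ∀ q ∈ Ω, dist c q ^ 2 ≤ ρ) : circumradius Ω ^ 2 ≤ ρ := by
  obtain ⟨q₀, hq₀⟩ := hne
  have hρ : 0 ≤ ρ := (sq_nonneg _).trans (h q₀ hq₀)
  have hball : Ω ⊆ closedBall c √ρ := fun q hq =>
    mem_closedBall'.2 (Real.le_sqrt_of_sq_le (h q hq))
  calc circumradius Ω ^ 2 ≤ √ρ ^ 2 := by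
        gcongr
        · exact circumradius_nonneg Ω
        · exact circumradius_le (Real.sqrt_nonneg ρ) hball
    _ = ρ := Real.sq_sqrt hρ

lemma exists_subset_closedBall_of_circumradius_lt (hne : Ω.Nonempty) (hΩ : IsBounded Ω)
    {r : ℝ} (hr : circumradius Ω < r) : ∃ c, Ω ⊆ closedBall c r := by
  obtain ⟨q₀, -⟩ := hne
  obtain ⟨R, hR, hΩR⟩ := hΩ.subset_closedBall_lt 0 q₀
  have hadm : {r : ℝ | 0 < r ∧ ∃ c : M, Ω ⊆ closedBall c r}.Nonempty := ⟨R, hR, q₀, hΩR⟩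
  obtain ⟨s, ⟨-, c, hc⟩, hsr⟩ := exists_lt_of_csInf_lt hadm hr
  exact ⟨c, hc.trans (closedBall_subset_closedBall hsr.le)⟩

end Metric

namespace HasSemiHyperbolicMidpoints

open Metric

variable {M : Type*} {Ω : Set M}

lemma dist_sq_le_of_subset_closedBall [PseudoMetricSpace M] (hM : HasSemiHyperbolicMidpoints M)
    (hne : Ω.Nonempty)
    {c₁ c₂ : M} {r₁ r₂ : ℝ} (h₁ : Ω ⊆ closedBall c₁ r₁) (h₂ : Ω ⊆ closedBall c₂ r₂) :
    dist c₁ c₂ ^ 2 ≤ 2 * (r₁ ^ 2 + r₂ ^ 2) - 4 * circumradius Ω ^ 2 := by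
  obtain ⟨m, hm⟩ := hM c₁ c₂
  have hmid : circumradius Ω ^ 2 ≤ (r₁ ^ 2 + r₂ ^ 2) / 2 - dist c₁ c₂ ^ 2 / 4 := by
    refine circumradius_sq_le hne fun q hq => (hm q).trans ?_
    have hq₁ : dist c₁ q ^ 2 ≤ r₁ ^ 2 := pow_le_pow_left₀ dist_nonneg (mem_closedBall'.1 (h₁ hq)) 2
    have hq₂ : dist c₂ q ^ 2 ≤ r₂ ^ 2 := pow_le_pow_left₀ dist_nonneg (mem_closedBall'.1 (h₂ hq)) 2
    linarith
  linarith

lemma exists_subset_closedBall_circumradius [PseudoMetricSpace M] [CompleteSpace M]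
    (hM : HasSemiHyperbolicMidpoints M) (hne : Ω.Nonempty) (hΩ : IsBounded Ω) :
    ∃ p, Ω ⊆ closedBall p (circumradius Ω) := by
  set r₀ := circumradius Ω
  have hr : Tendsto (fun n : ℕ => r₀ + 1 / (n + 1)) atTop (𝓝 r₀) := by
    simpa using tendsto_one_div_add_atTop_nhds_zero_nat.const_add r₀
  choose c hc using fun n : ℕ =>
    exists_subset_closedBall_of_circumradius_lt hne hΩ (lt_add_of_pos_right r₀ n.one_div_pos_of_nat)
  have hbound : Tendsto (fun n : ℕ × ℕ =>
      √(2 * ((r₀ + 1 / (n.1 + 1)) ^ 2 + (r₀ + 1 / (n.2 + 1)) ^ 2) - 4 * r₀ ^ 2)) atTop (𝓝 0) := by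
    have := ((((hr.comp tendsto_fst).pow 2).add ((hr.comp tendsto_snd).pow 2)).const_mul 2
      |>.sub_const (4 * r₀ ^ 2)).sqrt
    rwa [prod_atTop_atTop_eq, show 2 * (r₀ ^ 2 + r₀ ^ 2) - 4 * r₀ ^ 2 = 0 by ring,
      Real.sqrt_zero] at this
  have hcauchy : CauchySeq c := by
    rw [cauchySeq_iff_tendsto_dist_atTop_0]
    exact squeeze_zero (fun _ => dist_nonneg)
      (fun n => Real.le_sqrt_of_sq_le
        (hM.dist_sq_le_of_subset_closedBall hne (hc n.1) (hc n.2))) hbound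
  obtain ⟨p, hp⟩ := cauchySeq_tendsto_of_complete hcauchy
  exact ⟨p, fun q hq => le_of_tendsto_of_tendsto' (tendsto_const_nhds.dist hp) hr fun n => hc n hq⟩

lemma eq_of_subset_closedBall_circumradius [MetricSpace M] (hM : HasSemiHyperbolicMidpoints M)
    (hne : Ω.Nonempty) {p p' : M} (hp : Ω ⊆ closedBall p (circumradius Ω))
    (hp' : Ω ⊆ closedBall p' (circumradius Ω)) : p = p' := by
  have h := hM.dist_sq_le_of_subset_closedBall hne hp hp'
  exact dist_le_zero.1 (by nlinarith [dist_nonneg (x := p) (y := p')])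

end HasSemiHyperbolicMidpoints

/-- (Serre's circumcentre lemma, Lemma `le:SERRE`.)
`M` is a complete metric space satisfying the semi-hyperbolic (CAT(0) /
nonpositive curvature) midpoint inequality: any two points `p₀, p₁` admit a
midpoint `m` with `d(m,q)² ≤ (d(p₀,q)² + d(p₁,q)²)/2 − d(p₀,p₁)²/4` for all
`q` — this holds in every Hadamard manifold.  For every nonempty bounded set
`Ω ⊆ M`, with `r_Ω = inf{ r > 0 : ∃ p, Ω ⊆ B̄(p,r) }`, there is a unique
point `p_Ω` with `Ω ⊆ B̄(p_Ω, r_Ω)`. -/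
theorem stmt_14 {M : Type*} [MetricSpace M] [CompleteSpace M]
    (hmid : ∀ p₀ p₁ : M, ∃ m : M, ∀ q : M,
      dist m q ^ 2 ≤ (dist p₀ q ^ 2 + dist p₁ q ^ 2) / 2 - dist p₀ p₁ ^ 2 / 4)
    (Ω : Set M) (hne : Ω.Nonempty) (hbdd : Bornology.IsBounded Ω) :
    ∃! p : M, Ω ⊆ Metric.closedBall p
      (sInf {r : ℝ | 0 < r ∧ ∃ c : M, Ω ⊆ Metric.closedBall c r}) := by
  have hM : HasSemiHyperbolicMidpoints M := hmid
  obtain ⟨p, hp⟩ := hM.exists_subset_closedBall_circumradius hne hbdd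
  exact ⟨p, hp, fun p' hp' => hM.eq_of_subset_closedBall_circumradius hne hp' hp⟩
end

section
/- (Cartan fixed point theorem.) Let M be a complete, connected, simply connected Riemannian manifold of nonpositive sectional curvature, and let G be a compact topological group acting on M by isometries. Then there exists a point p ∈ M fixed by every element of G. -/
/-!
The fixed point is the circumcentre of an orbit. For a bounded nonempty set `S`, the function
`f x = (sup_{y ∈ S} dist x y)²` inherits the midpoint inequality
`f m ≤ (f a + f b) / 2 - dist a b ² / 4` from the space. Any bounded-below continuous function with
this property has a unique minimiser in a complete space: points of nearly minimal value are
close to each other, so a minimising sequence is Cauchy, and two minimisers are at distance `0`.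
Isometries preserving `S` preserve `f`, hence fix its minimiser; an orbit of a compact group is
bounded and invariant.
-/

open Set Bornology

section MidpointConvex

variable {M : Type*} [MetricSpace M] {f : M → ℝ}

theorem dist_sq_le_of_midpoint {ρ : ℝ} (hρ : ∀ q, ρ ≤ f q)
    (hmid : ∀ a b, ∃ m, f m ≤ (f a + f b) / 2 - dist a b ^ 2 / 4) (a b : M) :
    dist a b ^ 2 ≤ 2 * (f a - ρ) + 2 * (f b - ρ) := by
  obtain ⟨m, hm⟩ := hmid a b
  linarith [hρ m]

theorem existsUnique_forall_le_of_midpoint [CompleteSpace M] [Nonempty M]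
    (hf : Continuous f) (hbdd : BddBelow (range f))
    (hmid : ∀ a b, ∃ m, f m ≤ (f a + f b) / 2 - dist a b ^ 2 / 4) :
    ∃! p, ∀ q, f p ≤ f q := by
  obtain ⟨u, hu_anti, hu_lim, hu_mem⟩ := exists_seq_tendsto_sInf (range_nonempty f) hbdd
  set ρ := sInf (range f)
  have hρ : ∀ q, ρ ≤ f q := fun q => csInf_le hbdd (mem_range_self q)
  choose x hx using hu_mem
  have hcauchy : CauchySeq x := by
    refine cauchySeq_of_le_tendsto_0' (fun n => √(4 * (u n - ρ))) (fun n m hnm => ?_) ?_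
    · refine (Real.le_sqrt dist_nonneg (by linarith [hρ (x n), hx n])).2 ?_
      have := dist_sq_le_of_midpoint hρ hmid (x n) (x m)
      linarith [hu_anti hnm, hx n, hx m]
    · simpa using ((hu_lim.sub_const ρ).const_mul 4).sqrt
  obtain ⟨p, hp⟩ := cauchySeq_tendsto_of_complete hcauchy
  have hfp : f p = ρ := by
    refine tendsto_nhds_unique ((hf.tendsto p).comp hp) ?_
    simpa only [Function.comp_def, hx] using hu_lim
  refine ⟨p, fun q => hfp ▸ hρ q, fun q hq => ?_⟩
  have hfq : f q = ρ := le_antisymm (hfp ▸ hq p) (hρ q)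
  have := dist_sq_le_of_midpoint hρ hmid q p
  rw [hfq, hfp, sub_self, mul_zero, add_zero, sq_nonpos_iff, dist_eq_zero] at this
  exact this

end MidpointConvex

section SupDist

variable {M : Type*} [MetricSpace M] {S : Set M} {x y : M}

-- `sSup` of an unbounded or empty set of reals is `0`, hence the hypotheses on `S` below.
noncomputable def supDist (x : M) (S : Set M) : ℝ := sSup (dist x '' S)

theorem supDist_nonneg : 0 ≤ supDist x S :=
  Real.sSup_nonneg <| forall_mem_image.2 fun _ _ => dist_nonneg

theorem dist_le_supDist (hS : IsBounded S) (hy : y ∈ S) : dist x y ≤ supDist x S := by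
  obtain ⟨r, hr⟩ := (Metric.isBounded_iff_subset_closedBall x).1 hS
  refine le_csSup ⟨r, forall_mem_image.2 fun z hz => ?_⟩ (mem_image_of_mem _ hy)
  simpa [dist_comm] using hr hz

theorem supDist_le {c : ℝ} (hS : S.Nonempty) (h : ∀ y ∈ S, dist x y ≤ c) : supDist x S ≤ c :=
  csSup_le (hS.image _) (forall_mem_image.2 h)

theorem lipschitzWith_supDist (hS : IsBounded S) (hne : S.Nonempty) :
    LipschitzWith 1 (supDist · S) :=
  LipschitzWith.of_le_add fun x x' => supDist_le hne fun y hy =>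
    (dist_triangle x x' y).trans (by linarith [dist_le_supDist (x := x') hS hy])

theorem Isometry.supDist_image {φ : M → M} (hφ : Isometry φ) (x : M) (S : Set M) :
    supDist (φ x) (φ '' S) = supDist x S := by
  simp only [supDist, image_image, hφ.dist_eq]

theorem exists_supDist_sq_le_of_midpoint (hS : IsBounded S) (hne : S.Nonempty)
    (hmid : ∀ p₀ p₁ : M, ∃ m : M, ∀ q : M,
      dist m q ^ 2 ≤ (dist p₀ q ^ 2 + dist p₁ q ^ 2) / 2 - dist p₀ p₁ ^ 2 / 4) (p₀ p₁ : M) :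
    ∃ m, supDist m S ^ 2 ≤ (supDist p₀ S ^ 2 + supDist p₁ S ^ 2) / 2 - dist p₀ p₁ ^ 2 / 4 := by
  obtain ⟨m, hm⟩ := hmid p₀ p₁
  set B := (supDist p₀ S ^ 2 + supDist p₁ S ^ 2) / 2 - dist p₀ p₁ ^ 2 / 4
  have hB : ∀ y ∈ S, dist m y ^ 2 ≤ B := fun y hy => by
    have h₀ := pow_le_pow_left₀ dist_nonneg (dist_le_supDist (x := p₀) hS hy) 2
    have h₁ := pow_le_pow_left₀ dist_nonneg (dist_le_supDist (x := p₁) hS hy) 2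
    simp only [B]
    linarith [hm y]
  have hB₀ : 0 ≤ B := hne.elim fun y hy => (sq_nonneg _).trans (hB y hy)
  refine ⟨m, (Real.le_sqrt supDist_nonneg hB₀).1 (supDist_le hne fun y hy => ?_)⟩
  exact (Real.le_sqrt dist_nonneg hB₀).2 (hB y hy)

end SupDist

theorem stmt_15_general {M G : Type*} [MetricSpace M] [CompleteSpace M] [Nonempty M]
    [Group G] [TopologicalSpace G] [CompactSpace G]
    [MulAction G M] [ContinuousSMul G M]
    (hiso : ∀ g : G, Isometry fun x : M => g • x)
    (hmid : ∀ p₀ p₁ : M, ∃ m : M, ∀ q : M,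
      dist m q ^ 2 ≤ (dist p₀ q ^ 2 + dist p₁ q ^ 2) / 2 - dist p₀ p₁ ^ 2 / 4) :
    ∃ p : M, ∀ g : G, g • p = p := by
  obtain ⟨x₀⟩ := ‹Nonempty M›
  set S := MulAction.orbit G x₀
  have hS : IsBounded S := (isCompact_range (continuous_id.smul continuous_const)).isBounded
  have hne : S.Nonempty := ⟨x₀, MulAction.mem_orbit_self x₀⟩
  have hinv : ∀ (g : G) x, supDist (g • x) S = supDist x S := fun g x => by
    simpa only [S, image_smul, MulAction.smul_orbit] using (hiso g).supDist_image x S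
  obtain ⟨p, hp, huniq⟩ := existsUnique_forall_le_of_midpoint (f := fun x => supDist x S ^ 2)
    ((lipschitzWith_supDist hS hne).continuous.pow 2)
    ⟨0, forall_mem_range.2 fun _ => sq_nonneg _⟩
    (exists_supDist_sq_le_of_midpoint hS hne hmid)
  exact ⟨p, fun g => huniq _ fun q => by simpa only [hinv] using hp q⟩

/-- (Cartan fixed point theorem, Theorem `thm:CARTAN`.)
`M` is a complete metric space satisfying the semi-hyperbolic midpoint
inequality of nonpositive curvature (valid in every complete, connected,
simply connected Riemannian manifold of nonpositive sectional curvature, and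
in every complete CAT(0) space).  If a compact topological group `G` acts
continuously on `M` by isometries, then the action has a fixed point. -/
theorem stmt_15 {M G : Type*} [MetricSpace M] [CompleteSpace M] [Nonempty M]
    [Group G] [TopologicalSpace G] [CompactSpace G] [IsTopologicalGroup G]
    [MulAction G M] [ContinuousSMul G M]
    (hiso : ∀ g : G, Isometry fun x : M => g • x)
    (hmid : ∀ p₀ p₁ : M, ∃ m : M, ∀ q : M,
      dist m q ^ 2 ≤ (dist p₀ q ^ 2 + dist p₁ q ^ 2) / 2 - dist p₀ p₁ ^ 2 / 4) :
    ∃ p : M, ∀ g : G, g • p = p :=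
  stmt_15_general hiso hmid
end

section
/- (Interpolation at odd roots of unity.) For every N ∈ ℕ there exist real numbers β₀, β₁, …, β_{2N−1} with β_ν = 0 for ν even, such that for every odd k with 1 ≤ k ≤ 4N−1, k ≠ 2N: Σ_{ν=0}^{2N−1} β_ν · exp(kνπi/(2N)) equals i if 0 < k < 2N, and equals −i if 2N < k < 4N. -/
/-!
Take `β ν = 1 / (N sin (νπ / 2N))` for odd `ν`. With `w = exp (iνπ / 2N)` one has
`1 / sin (νπ / 2N) = 2i w / (w² - 1)`, so for `k = 2m - 1` the sum becomes
`(2i / N) ∑ z ^ m / (z - 1)` over the `N` roots `z = ζ ^ (2j + 1)` of `z ^ N = -1`, where `ζ` is a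
primitive `2N`-th root of unity. Expanding `z ^ m / (z - 1) = 1 + z + ⋯ + z ^ (m - 1) + 1 / (z - 1)`,
the power sums `∑ z ^ t` vanish for `0 < t < N`, and pairing `z` with `z⁻¹` gives
`∑ 1 / (z - 1) = -N / 2`; hence the sum is `N / 2` for `m ≤ N`, and `z ^ (N + r) = -z ^ r` flips
its sign for `m > N`.
-/

open Finset Complex

theorem Finset.sum_range_two_mul {M : Type*} [AddCommMonoid M] (f : ℕ → M) (n : ℕ) :
    ∑ i ∈ range (2 * n), f i = ∑ j ∈ range n, (f (2 * j) + f (2 * j + 1)) := by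
  induction n with
  | zero => simp
  | succ n ih => rw [Nat.mul_succ, sum_range_succ, sum_range_succ, sum_range_succ, ih, add_assoc]

theorem inv_sub_one_add_inv_sub_one_of_mul_eq_one {K : Type*} [Field K] {z w : K}
    (hzw : z * w = 1) (hz : z ≠ 1) : (z - 1)⁻¹ + (w - 1)⁻¹ = -1 := by
  have hz1 : z - 1 ≠ 0 := sub_ne_zero.2 hz
  have hw0 : w ≠ 0 := right_ne_zero_of_mul_eq_one hzw
  rw [show w - 1 = -(z - 1) * w by linear_combination hzw]
  field_simp
  linear_combination hzw

namespace IsPrimitiveRoot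

variable {K : Type*} [Field K] {ζ : K} {N : ℕ}

theorem pow_odd_ne_one (h : IsPrimitiveRoot ζ (2 * N)) (j : ℕ) : ζ ^ (2 * j + 1) ≠ 1 := by
  rw [Ne, h.pow_eq_one_iff_dvd]
  intro hdvd
  have := (dvd_mul_right 2 N).trans hdvd
  omega

theorem sum_pow_odd_mul (h : IsPrimitiveRoot ζ (2 * N)) (t : ℕ) :
    ∑ j ∈ range N, ζ ^ ((2 * j + 1) * t) = if N ∣ t then N * ζ ^ t else 0 := by
  have hterm : ∀ j, ζ ^ ((2 * j + 1) * t) = ζ ^ t * (ζ ^ (2 * t)) ^ j := fun j => by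
    rw [← pow_mul, ← pow_add]; ring_nf
  simp only [hterm, ← mul_sum]
  have hroot : ζ ^ (2 * t) = 1 ↔ N ∣ t := by
    rw [h.pow_eq_one_iff_dvd]; exact Nat.mul_dvd_mul_iff_left two_pos
  split_ifs with ht
  · rw [hroot.2 ht]
    simp [mul_comm]
  · have hN : (ζ ^ (2 * t)) ^ N = 1 := by rw [← pow_mul, mul_right_comm, pow_mul, h.pow_eq_one, one_pow]
    rw [geom_sum_eq (mt hroot.1 ht), hN, sub_self, zero_div, mul_zero]

theorem two_mul_sum_inv_pow_odd_sub_one (h : IsPrimitiveRoot ζ (2 * N)) :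
    2 * ∑ j ∈ range N, (ζ ^ (2 * j + 1) - 1)⁻¹ = -N := by
  have hpair : ∀ j ∈ range N,
      (ζ ^ (2 * j + 1) - 1)⁻¹ + (ζ ^ (2 * (N - 1 - j) + 1) - 1)⁻¹ = -1 := by
    intro j hj
    refine inv_sub_one_add_inv_sub_one_of_mul_eq_one ?_ (h.pow_odd_ne_one j)
    rw [← pow_add, show 2 * j + 1 + (2 * (N - 1 - j) + 1) = 2 * N by grind, h.pow_eq_one]
  calc 2 * ∑ j ∈ range N, (ζ ^ (2 * j + 1) - 1)⁻¹
      = ∑ j ∈ range N, ((ζ ^ (2 * j + 1) - 1)⁻¹ + (ζ ^ (2 * (N - 1 - j) + 1) - 1)⁻¹) := by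
        rw [sum_add_distrib, sum_range_reflect (fun j => (ζ ^ (2 * j + 1) - 1)⁻¹) N, two_mul]
    _ = -N := by simp [sum_congr rfl hpair]

theorem pow_eq_neg_one (h : IsPrimitiveRoot ζ (2 * N)) (hN : 0 < N) : ζ ^ N = -1 :=
  (IsPrimitiveRoot.pow (by omega) h (mul_comm 2 N)).eq_neg_one_of_two_right

theorem two_mul_sum_pow_odd_div_sub_one_of_le (h : IsPrimitiveRoot ζ (2 * N)) {m : ℕ}
    (hm : 0 < m) (hmN : m ≤ N) :
    2 * ∑ j ∈ range N, ζ ^ ((2 * j + 1) * m) / (ζ ^ (2 * j + 1) - 1) = N := by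
  have hsplit : ∀ j, ζ ^ ((2 * j + 1) * m) / (ζ ^ (2 * j + 1) - 1)
      = ∑ t ∈ range m, ζ ^ ((2 * j + 1) * t) + (ζ ^ (2 * j + 1) - 1)⁻¹ := fun j => by
    have hz := sub_ne_zero.2 (h.pow_odd_ne_one j)
    simp only [pow_mul]
    rw [div_eq_iff hz, add_mul, inv_mul_cancel₀ hz, geom_sum_mul, sub_add_cancel]
  have hpowsum : ∑ t ∈ range m, ∑ j ∈ range N, ζ ^ ((2 * j + 1) * t) = N := by
    rw [sum_eq_single 0 (fun t ht ht0 => ?_) (by simp [hm])]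
    · simp
    · rw [h.sum_pow_odd_mul, if_neg (Nat.not_dvd_of_pos_of_lt (by omega) (by simp at ht; omega))]
  simp only [hsplit, sum_add_distrib, mul_add, h.two_mul_sum_inv_pow_odd_sub_one]
  rw [sum_comm, hpowsum]
  ring

theorem two_mul_sum_pow_odd_div_sub_one_of_lt (h : IsPrimitiveRoot ζ (2 * N)) {m : ℕ}
    (hNm : N < m) (hm : m ≤ 2 * N) :
    2 * ∑ j ∈ range N, ζ ^ ((2 * j + 1) * m) / (ζ ^ (2 * j + 1) - 1) = -N := by
  obtain ⟨r, rfl⟩ := Nat.exists_eq_add_of_lt hNm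
  have hneg : ∀ j, ζ ^ ((2 * j + 1) * (N + r + 1)) = -ζ ^ ((2 * j + 1) * (r + 1)) := fun j => by
    rw [show (2 * j + 1) * (N + r + 1) = N * (2 * j + 1) + (2 * j + 1) * (r + 1) by ring,
      pow_add, pow_mul, h.pow_eq_neg_one (by omega), (odd_two_mul_add_one j).neg_one_pow, neg_one_mul]
  simp only [hneg, neg_div, sum_neg_distrib, mul_neg,
    h.two_mul_sum_pow_odd_div_sub_one_of_le (Nat.succ_pos r) (by omega : r + 1 ≤ N)]

end IsPrimitiveRoot

theorem Complex.ofReal_inv_sin (x : ℝ) :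
    (((Real.sin x)⁻¹ : ℝ) : ℂ) = 2 * I * exp (x * I) / (exp (x * I) ^ 2 - 1) := by
  have h : exp (x * I) ^ 2 - 1 = 2 * I * exp (x * I) * Real.sin x := by
    rw [ofReal_sin, Complex.sin, neg_mul, exp_neg]
    field_simp
    rw [I_sq]
    ring
  rw [h, div_mul_cancel_left₀ (by simp [exp_ne_zero]), ofReal_inv]

theorem Complex.ofReal_inv_mul_sin_mul_exp {N : ℕ} (hN : N ≠ 0) (ν m : ℕ) :
    (((N * Real.sin (ν * Real.pi / (2 * N)))⁻¹ : ℝ) : ℂ) *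
        exp (((2 * m + 1 : ℕ) : ℂ) * ν * Real.pi * I / (2 * N)) =
      2 * I / N * (exp (2 * Real.pi * I / (2 * N : ℕ)) ^ (ν * (m + 1)) /
        (exp (2 * Real.pi * I / (2 * N : ℕ)) ^ ν - 1)) := by
  have hN' : (N : ℂ) ≠ 0 := by exact_mod_cast hN
  rw [mul_inv, ofReal_mul, ofReal_inv_sin, ofReal_inv, ofReal_natCast]
  set e := exp (((ν * Real.pi / (2 * N) : ℝ) : ℂ) * I)
  have hζ : exp (2 * Real.pi * I / (2 * N : ℕ)) ^ ν = e ^ 2 := by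
    rw [← exp_nat_mul, ← exp_nat_mul]
    congr 1
    push_cast
    field_simp
  have hk : exp (((2 * m + 1 : ℕ) : ℂ) * ν * Real.pi * I / (2 * N)) = e ^ (2 * m + 1) := by
    rw [← exp_nat_mul]
    congr 1
    push_cast
    field_simp
  rw [hk, pow_mul, hζ, ← pow_mul]
  ring

/-- (Lemma `le:parabolic2`: interpolation at odd roots of
unity.)  For every `N ≥ 1` there are real numbers `β 0, …, β (2N−1)`,
vanishing for even indices, such that for every odd `k` with
`1 ≤ k ≤ 4N − 1` (note `k ≠ 2N` automatically):
`∑_{ν=0}^{2N−1} β ν · exp(kνπi/(2N)) = i` if `0 < k < 2N`, and `= −i` if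
`2N < k < 4N`. -/
theorem stmt_17 (N : ℕ) (hN : 0 < N) :
    ∃ β : ℕ → ℝ, (∀ ν, Even ν → β ν = 0) ∧
      ∀ k : ℕ, Odd k → 1 ≤ k → k ≤ 4 * N - 1 →
        (∑ ν ∈ Finset.range (2 * N),
            (β ν : ℂ) *
              Complex.exp ((k : ℂ) * (ν : ℂ) * (Real.pi : ℂ) * Complex.I /
                (2 * (N : ℂ))))
          = if k < 2 * N then Complex.I else -Complex.I := by
  have hζ : IsPrimitiveRoot (exp (2 * Real.pi * I / (2 * N : ℕ))) (2 * N) :=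
    isPrimitiveRoot_exp _ (by omega)
  refine ⟨fun ν => if Odd ν then ((N : ℝ) * Real.sin (ν * Real.pi / (2 * N)))⁻¹ else 0,
    fun ν hν => if_neg (Nat.not_odd_iff_even.2 hν), ?_⟩
  rintro k ⟨m, rfl⟩ - hk
  simp only [sum_range_two_mul, if_neg (Nat.not_odd_iff_even.2 (even_two_mul _)),
    if_pos (odd_two_mul_add_one _), ofReal_zero, zero_mul, zero_add,
    ofReal_inv_mul_sin_mul_exp hN.ne', ← mul_sum]
  have hN' : (N : ℂ) ≠ 0 := by exact_mod_cast hN.ne'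
  by_cases hmN : m + 1 ≤ N
  · rw [eq_div_of_mul_eq two_ne_zero ((mul_comm _ _).trans
      (hζ.two_mul_sum_pow_odd_div_sub_one_of_le (by omega) hmN)), if_pos (by omega)]
    field_simp
  · rw [eq_div_of_mul_eq two_ne_zero ((mul_comm _ _).trans
      (hζ.two_mul_sum_pow_odd_div_sub_one_of_lt (by omega) (by omega))), if_neg (by omega)]
    field_simp
end

section
/- (Sign interpolation at roots of unity.) For every m ∈ ℕ and N = 2^m there exist real numbers α₀, α₁, …, α_{2N−1} with α_ν = 0 for ν even, such that for all k ∈ {0, 1, …, 2N−1}: Σ_{ν=0}^{2N−1} α_ν · exp(kνπi/N) equals i if 1 ≤ k ≤ N−1, equals −i if N+1 ≤ k ≤ 2N−1, and equals 0 if k = 0 or k = N. -/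
/-!
On `ZMod (2 * N)` the values to interpolate are `j ↦ i · sign (Im ζ ^ j)` with
`ζ = exp (π i / N)`, so the coefficients can be read off from their discrete Fourier
transform. That transform is real because the values satisfy `f (-j) = conj (f j)`, and it
vanishes at even frequencies because `f (j + N) = -f j`.
-/

open Complex ComplexConjugate Finset ZMod Real

namespace ZMod

section

variable {n : ℕ} [NeZero n]

lemma sum_univ_eq_sum_range {M : Type*} [AddCommMonoid M] (f : ZMod n → M) :
    ∑ x, f x = ∑ i ∈ range n, f i :=
  Finset.sum_nbij' val Nat.cast (fun x _ => mem_range.2 (val_lt x)) (fun _ _ => mem_univ _)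
    (fun x _ => natCast_zmod_val x) (fun _ hi => val_cast_of_lt (mem_range.1 hi)) (by simp)

lemma conj_stdAddChar (j : ZMod n) : conj (stdAddChar j) = stdAddChar (-j) := by
  rw [AddChar.map_neg_eq_inv, stdAddChar_apply, ← Circle.coe_inv_eq_conj, Circle.coe_inv]

lemma ofReal_re_dft {Φ : ZMod n → ℂ} (hΦ : ∀ j, Φ (-j) = conj (Φ j)) (k : ZMod n) :
    ((𝓕 Φ k).re : ℂ) = 𝓕 Φ k := by
  rw [← conj_eq_iff_re, dft_apply, map_sum]
  refine Fintype.sum_equiv (Equiv.neg _) _ _ fun j => ?_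
  simp [conj_stdAddChar, hΦ]

lemma dft_eq_zero_of_antiperiodic {Φ : ZMod n → ℂ} {a : ZMod n}
    (hΦ : Function.Antiperiodic Φ a) {k : ZMod n} (hak : a * k = 0) : 𝓕 Φ k = 0 := by
  have h : 𝓕 Φ k = -𝓕 Φ k := by
    rw [dft_apply, ← sum_neg_distrib]
    exact Fintype.sum_equiv (Equiv.addRight a) _ _ fun j => by simp [hΦ j, add_mul, hak]
  exact CharZero.eq_neg_self_iff.1 h

end

section

variable {N : ℕ} [NeZero N]

lemma stdAddChar_natCast_two_mul (j : ℕ) :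
    stdAddChar (j : ZMod (2 * N)) = exp (j * π * I / N) := by
  rw [← Int.cast_natCast, stdAddChar_coe]
  congr 1
  push_cast
  field_simp

lemma stdAddChar_natCast_half : stdAddChar (N : ZMod (2 * N)) = -1 := by
  rw [stdAddChar_natCast_two_mul, mul_assoc, mul_div_cancel_left₀ _ (NeZero.ne (N : ℂ)),
    exp_pi_mul_I]

lemma im_stdAddChar_natCast_two_mul (j : ℕ) :
    (stdAddChar (j : ZMod (2 * N))).im = Real.sin (j * π / N) := by
  rw [stdAddChar_natCast_two_mul,
    show (j : ℂ) * π * I / N = ((j * π / N : ℝ) : ℂ) * I by push_cast; ring, exp_ofReal_mul_I_im]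

end

end ZMod

section

variable {N : ℕ} [NeZero N]

variable (N) in
noncomputable def rootOfUnitySign (j : ZMod (2 * N)) : ℂ := I * Real.sign (stdAddChar j).im

lemma rootOfUnitySign_antiperiodic : Function.Antiperiodic (rootOfUnitySign N) N := fun j => by
  simp [rootOfUnitySign, AddChar.map_add_eq_mul, stdAddChar_natCast_half, Real.sign_neg]

lemma rootOfUnitySign_neg (j : ZMod (2 * N)) :
    rootOfUnitySign N (-j) = conj (rootOfUnitySign N j) := by
  simp [rootOfUnitySign, ← conj_stdAddChar, Real.sign_neg]

lemma rootOfUnitySign_natCast {k : ℕ} (hk : k < 2 * N) :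
    rootOfUnitySign N k = if k = 0 ∨ k = N then 0 else if k < N then I else -I := by
  have hN : (0 : ℝ) < N := by exact_mod_cast Nat.pos_of_neZero N
  rw [rootOfUnitySign, im_stdAddChar_natCast_two_mul]
  split_ifs with hk0 hkN
  · obtain rfl | rfl := hk0
    · simp
    · simp [hN.ne']
  · have hk' : (0 : ℝ) < k := by exact_mod_cast (show 0 < k by omega)
    have hkN' : (k : ℝ) < N := by exact_mod_cast hkN
    have hpos : 0 < k * π / N := by positivity
    have hlt : k * π / N < π := by
      rw [div_lt_iff₀ hN]
      nlinarith [pi_pos]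
    simp [Real.sign_of_pos (sin_pos_of_pos_of_lt_pi hpos hlt)]
  · have hNk : (N : ℝ) < k := by exact_mod_cast (show N < k by omega)
    have hk' : (k : ℝ) < 2 * N := by exact_mod_cast hk
    have hpos : 0 < k * π / N - π := by
      rw [sub_pos, lt_div_iff₀ hN]
      nlinarith [pi_pos]
    have hlt : k * π / N - π < π := by
      rw [sub_lt_iff_lt_add, div_lt_iff₀ hN]
      nlinarith [pi_pos]
    have hsin := sin_pos_of_pos_of_lt_pi hpos hlt
    rw [Real.sin_sub_pi, neg_pos] at hsin
    simp [Real.sign_of_neg hsin]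

end

theorem exists_sign_interpolation (N : ℕ) [NeZero N] :
    ∃ α : ℕ → ℝ, (∀ ν, Even ν → α ν = 0) ∧ ∀ k < 2 * N,
      ∑ ν ∈ range (2 * N), (α ν : ℂ) * exp (k * ν * π * I / N) =
        if k = 0 ∨ k = N then 0 else if k < N then I else -I := by
  refine ⟨fun ν => (𝓕 (rootOfUnitySign N) ν).re / (2 * N), fun ν ⟨t, ht⟩ => ?_, fun k hk => ?_⟩
  · have hNν : (N : ZMod (2 * N)) * ν = 0 := by
      rw [ht, ← Nat.cast_mul, show N * (t + t) = 2 * N * t by ring, Nat.cast_mul, natCast_self,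
        zero_mul]
    simp [dft_eq_zero_of_antiperiodic rootOfUnitySign_antiperiodic hNν]
  · calc _ = 𝓕⁻ (𝓕 (rootOfUnitySign N)) k := by
          rw [invDFT_apply, sum_univ_eq_sum_range, smul_eq_mul, mul_sum]
          refine sum_congr rfl fun ν _ => ?_
          rw [smul_eq_mul, mul_comm (ν : ZMod (2 * N)), ← Nat.cast_mul (α := ZMod (2 * N)),
            stdAddChar_natCast_two_mul]
          push_cast [ofReal_re_dft rootOfUnitySign_neg]
          ring
      _ = _ := by rw [LinearEquiv.symm_apply_apply, rootOfUnitySign_natCast hk]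

/-- (Lemma `le:parabolic3`: sign interpolation at roots of
unity.)  For every `m ∈ ℕ` and `N = 2^m` there are real numbers
`α 0, …, α (2N−1)`, vanishing for even indices, such that for every
`k ∈ {0, 1, …, 2N−1}`:
`∑_{ν=0}^{2N−1} α ν · exp(kνπi/N)` equals `i` if `1 ≤ k ≤ N−1`, equals `−i`
if `N+1 ≤ k ≤ 2N−1`, and equals `0` if `k = 0` or `k = N`. -/
theorem stmt_18 (m : ℕ) :
    ∃ α : ℕ → ℝ, (∀ ν, Even ν → α ν = 0) ∧
      ∀ k : ℕ, k < 2 * 2 ^ m →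
        (∑ ν ∈ Finset.range (2 * 2 ^ m),
            (α ν : ℂ) *
              Complex.exp ((k : ℂ) * (ν : ℂ) * (Real.pi : ℂ) * Complex.I /
                ((2 : ℂ) ^ m)))
          = if k = 0 ∨ k = 2 ^ m then 0
            else if k < 2 ^ m then Complex.I else -Complex.I := by
  simpa using exists_sign_interpolation (2 ^ m)
end
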